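/- Let q ≥ 2 be an integer and δ > 1, 1/2 < λ < 1 reals, with α_j = (2λ)^{j−1} and K_j as defined recursively (K_1 ≥ 1, β_j = ⌈e^{α_{j−1}^δ ln K_{j−1}}⌉, K_j = q^{β_j}). Then for all j ≥ 2, ln*(K_j) ≤ 2·ln*(q) + ln*(K_{j−1}) + ln*(α_j^δ) + 1. -/
import Mathlib
open Real Filter

noncomputable def tet : ℕ → ℝ
  | 0 => 1
  | n + 1 => Real.exp (tet n)

noncomputable def lnStar (x : ℝ) : ℕ := sInf {n : ℕ | Real.log^[n] x ≤ 1}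

lemma one_le_tet (n : ℕ) : 1 ≤ tet n := by
  induction n with
  | zero => simp [tet]
  | succ n ih => simpa [tet] using Real.one_le_exp (by linarith)

lemma tet_pos (n : ℕ) : 0 < tet n := lt_of_lt_of_le one_pos (one_le_tet n)

lemma tet_mono : Monotone tet := by
  apply monotone_nat_of_le_succ
  intro n
  have h := Real.add_one_le_exp (tet n)
  simp only [tet]
  linarith

lemma add_one_le_tet (n : ℕ) : (n : ℝ) + 1 ≤ tet n := by
  induction n with
  | zero => simp [tet]
  | succ n ih =>
    have h := Real.add_one_le_exp (tet n)
    simp only [tet]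
    push_cast
    linarith

lemma exists_iter_log_le (n : ℕ) : ∀ x : ℝ, x ≤ tet n → ∃ m ≤ n, Real.log^[m] x ≤ 1 := by
  induction n with
  | zero => intro x hx; exact ⟨0, le_refl 0, by simpa [tet] using hx⟩
  | succ n ih =>
    intro x hx
    rcases le_or_gt x 1 with h1 | h1
    · exact ⟨0, Nat.zero_le _, h1⟩
    · have hlog : Real.log x ≤ tet n := by
        have := Real.log_le_log (by linarith) hx
        simpa [tet, Real.log_exp] using this
      obtain ⟨m, hm, hle⟩ := ih (Real.log x) hlog
      exact ⟨m + 1, by omega, by rwa [Function.iterate_succ_apply]⟩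

lemma lnStar_le_of_le_tet {x : ℝ} {n : ℕ} (h : x ≤ tet n) : lnStar x ≤ n := by
  obtain ⟨m, hm, hle⟩ := exists_iter_log_le n x h
  exact le_trans (Nat.sInf_le hle) hm

lemma le_tet_of_iter_log_le {n : ℕ} : ∀ x : ℝ, 0 ≤ x → Real.log^[n] x ≤ 1 → x ≤ tet n := by
  induction n with
  | zero => intro x _ h; simpa [tet] using h
  | succ n ih =>
    intro x hx h
    rcases le_or_gt x 1 with h1 | h1
    · exact le_trans h1 (one_le_tet _)
    · rw [Function.iterate_succ_apply] at h
      have hlog := ih (Real.log x) (Real.log_nonneg h1.le) h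
      calc x = Real.exp (Real.log x) := (Real.exp_log (by linarith)).symm
        _ ≤ Real.exp (tet n) := Real.exp_le_exp.2 hlog
        _ = tet (n + 1) := rfl

lemma le_tet_lnStar {x : ℝ} (hx : 0 ≤ x) : x ≤ tet (lnStar x) := by
  have hne : {n : ℕ | Real.log^[n] x ≤ 1}.Nonempty := by
    obtain ⟨m, _, hle⟩ := exists_iter_log_le ⌈x⌉₊ x
      (le_trans (Nat.le_ceil x) (by linarith [add_one_le_tet ⌈x⌉₊]))
    exact ⟨m, hle⟩
  exact le_tet_of_iter_log_le x hx (Nat.sInf_mem hne)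

lemma two_mul_tet_le (n : ℕ) : 2 * tet n ≤ tet (n + 1) := by
  have h1 : tet n ≤ Real.exp (tet n - 1) := by
    have := Real.add_one_le_exp (tet n - 1); linarith
  have h2 : (2 : ℝ) ≤ Real.exp 1 := by
    have := Real.exp_one_gt_d9; linarith
  calc 2 * tet n ≤ Real.exp 1 * Real.exp (tet n - 1) :=
        mul_le_mul h2 h1 (tet_pos n).le (Real.exp_pos 1).le
    _ = Real.exp (tet n) := by rw [← Real.exp_add]; ring_nf
    _ = tet (n + 1) := rfl

lemma tet_add_le (a b : ℕ) : tet a + tet b ≤ tet (a + b) + 1 := by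
  match a, b with
  | 0, b => simp [tet]; linarith [one_le_tet b]
  | a + 1, 0 => simp [tet]
  | a + 1, b + 1 =>
    have h1 : tet (a + 1) ≤ tet (a + b + 1) := tet_mono (by omega)
    have h2 : tet (b + 1) ≤ tet (a + b + 1) := tet_mono (by omega)
    have h3 := two_mul_tet_le (a + b + 1)
    have h4 : tet (a + b + 2) = tet (a + 1 + (b + 1)) := by ring_nf
    have := one_le_tet (a + 1 + (b + 1))
    linarith [h4 ▸ h3]

lemma tet_mul_le (a b : ℕ) : tet a * tet b ≤ tet (a + b) := by
  match a with
  | 0 => simp [tet]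
  | a + 1 =>
    have h1 : tet b ≤ Real.exp (tet b - 1) := by
      have := Real.add_one_le_exp (tet b - 1); linarith
    have h2 : tet a + tet b - 1 ≤ tet (a + b) := by linarith [tet_add_le a b]
    calc tet (a + 1) * tet b = Real.exp (tet a) * tet b := rfl
      _ ≤ Real.exp (tet a) * Real.exp (tet b - 1) :=
        mul_le_mul_of_nonneg_left h1 (Real.exp_pos _).le
      _ = Real.exp (tet a + tet b - 1) := by rw [← Real.exp_add]; ring_nf
      _ ≤ Real.exp (tet (a + b)) := Real.exp_le_exp.2 h2
      _ = tet (a + b + 1) := rfl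
      _ = tet (a + 1 + b) := by rw [show a + 1 + b = a + b + 1 from by omega]

theorem stmt16 (q : ℕ) (hq : 2 ≤ q) (l : ℝ) (hl1 : 1 / 2 < l) (hl2 : l < 1)
    (δ : ℝ) (hδ : 1 < δ) (K : ℕ → ℝ) (hK1 : 1 ≤ K 1)
    (hrec : ∀ j : ℕ, 2 ≤ j →
      K j = (q : ℝ) ^
        (⌈Real.exp (((2 * l) ^ (j - 2) : ℝ) ^ δ * Real.log (K (j - 1)))⌉₊ : ℕ)) :
    ∀ j : ℕ, 2 ≤ j →
      lnStar (K j) ≤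
        2 * lnStar (q : ℝ) + lnStar (K (j - 1)) +
          lnStar (((2 * l) ^ (j - 1) : ℝ) ^ δ) + 1 := by
  intro j hj
  have hq1 : (1 : ℝ) ≤ (q : ℝ) := by exact_mod_cast Nat.one_le_of_lt hq
  have hq2 : (2 : ℝ) ≤ (q : ℝ) := by exact_mod_cast hq
  have h2l : (1 : ℝ) ≤ 2 * l := by linarith
  -- K (j-1) ≥ 1
  have hKprev : 1 ≤ K (j - 1) := by
    rcases eq_or_lt_of_le hj with h | h
    · simpa [← h] using hK1
    · rw [hrec (j - 1) (by omega)]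
      exact one_le_pow₀ hq1
  set a := lnStar (q : ℝ) with ha
  set t := lnStar (K (j - 1)) with ht
  set u := lnStar (((2 * l) ^ (j - 1) : ℝ) ^ δ) with hu
  -- a ≥ 1
  have hq_tet : (q : ℝ) ≤ tet a := le_tet_lnStar (by linarith)
  have ha1 : 1 ≤ a := by
    by_contra h
    have : a = 0 := by omega
    rw [this] at hq_tet
    simp [tet] at hq_tet
    linarith
  obtain ⟨a', ha'⟩ : ∃ a', a = a' + 1 := ⟨a - 1, by omega⟩
  -- bounds from lnStar
  have hαpow : ((2 * l) ^ (j - 2) : ℝ) ^ δ ≤ ((2 * l) ^ (j - 1) : ℝ) ^ δ := by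
    apply Real.rpow_le_rpow (by positivity)
    · exact pow_le_pow_right₀ h2l (by omega)
    · linarith
  have hu_tet : ((2 * l) ^ (j - 1) : ℝ) ^ δ ≤ tet u := le_tet_lnStar (by positivity)
  have ht_tet : K (j - 1) ≤ tet t := le_tet_lnStar (by linarith)
  have hlogK : Real.log (K (j - 1)) ≤ tet t := by
    have := Real.log_le_sub_one_of_pos (show 0 < K (j - 1) by linarith)
    linarith
  have hlogK0 : 0 ≤ Real.log (K (j - 1)) := Real.log_nonneg hKprev
  -- the exponent argument
  have hprod : ((2 * l) ^ (j - 2) : ℝ) ^ δ * Real.log (K (j - 1)) ≤ tet (u + t) :=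
    le_trans (mul_le_mul (hαpow.trans hu_tet) hlogK hlogK0 (tet_pos u).le) (tet_mul_le u t)
  set β := ⌈Real.exp (((2 * l) ^ (j - 2) : ℝ) ^ δ * Real.log (K (j - 1)))⌉₊ with hβdef
  have hβ : (β : ℝ) ≤ tet (u + t + 2) := by
    have h1 : (β : ℝ) ≤ Real.exp (((2 * l) ^ (j - 2) : ℝ) ^ δ * Real.log (K (j - 1))) + 1 :=
      (Nat.ceil_lt_add_one (Real.exp_pos _).le).le
    have h2 : Real.exp (((2 * l) ^ (j - 2) : ℝ) ^ δ * Real.log (K (j - 1))) ≤ tet (u + t + 1) :=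
      Real.exp_le_exp.2 hprod
    have h3 := one_le_tet (u + t + 1)
    have h4 := two_mul_tet_le (u + t + 1)
    linarith
  have hlogq : Real.log (q : ℝ) ≤ tet a' := by
    have := Real.log_le_log (by linarith) hq_tet
    rwa [ha', show tet (a' + 1) = Real.exp (tet a') from rfl, Real.log_exp] at this
  have hlogq0 : 0 ≤ Real.log (q : ℝ) := Real.log_nonneg hq1
  have hKj : K j = (q : ℝ) ^ β := hrec j hj
  have hlogKj : Real.log (K j) ≤ tet (u + t + 2 + a') := by
    rw [hKj, Real.log_pow]
    exact le_trans (mul_le_mul hβ hlogq (by linarith) (tet_pos _).le) (tet_mul_le _ _)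
  have hKj_tet : K j ≤ tet (u + t + 2 + a' + 1) := by
    have hpos : 0 < K j := by rw [hKj]; positivity
    calc K j = Real.exp (Real.log (K j)) := (Real.exp_log hpos).symm
      _ ≤ Real.exp (tet (u + t + 2 + a')) := Real.exp_le_exp.2 hlogKj
      _ = tet (u + t + 2 + a' + 1) := rfl
  have hfinal : K j ≤ tet (2 * a + t + u + 1) :=
    le_trans hKj_tet (tet_mono (by omega))
  exact lnStar_le_of_le_tet hfinal
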